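/- If M is a d×d matrix all of whose eigenvalues have strictly negative real part, then for every symmetric positive semidefinite matrix U the Lyapunov equation U + M V + V M^T = 0 has the unique solution V = ∫_0^∞ e^{Mt} U e^{M^T t} dt, and this V is symmetric positive semidefinite. -/

import Mathlib

/-!
Write `F_c(t) = e^{tM} c e^{tMᵀ}`. Since `F_c' = F_{Mc + cMᵀ}` and `F_c(0) = c`, and since
`F_c(t)` decays exponentially (each vector is a sum of generalised eigenvectors of `M`, on which
`e^{tM}` acts as `e^{tμ}` times a polynomial in `t`), the fundamental theorem of calculus gives
`∫₀^∞ F_{Mc + cMᵀ} = -c`. Thus `c ↦ ∫₀^∞ F_c` inverts `-(X ↦ MX + XMᵀ)` on both sides, which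
gives existence and uniqueness; `V = ∫₀^∞ F_U` is positive semidefinite because every `F_U(t)` is.
-/

open Matrix

open NormedSpace Set Filter Topology MeasureTheory Asymptotics Finset
open scoped Nat

theorem Set.Finite.exists_pos_forall_lt_neg {α : Type*} {s : Set α} (hs : s.Finite) {f : α → ℝ}
    (h : ∀ x ∈ s, f x < 0) : ∃ ε > 0, ∀ x ∈ s, f x < -ε := by
  have hnear : ∀ᶠ ε in 𝓝 (0 : ℝ), ∀ x ∈ s, f x < -ε := hs.eventually_all.2 fun x hx =>
    (eventually_lt_nhds (neg_pos.2 (h x hx))).mono fun ε hε => lt_neg.2 hε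
  have hright : ∀ᶠ ε in 𝓝[>] (0 : ℝ), ∀ x ∈ s, f x < -ε := nhdsWithin_le_nhds hnear
  obtain ⟨ε, hε, hpos⟩ := (hright.and self_mem_nhdsWithin).exists
  exact ⟨ε, hpos, hε⟩

theorem Real.tendsto_exp_neg_mul_atTop_nhds_zero {ε : ℝ} (hε : 0 < ε) :
    Tendsto (fun t => Real.exp (-ε * t)) atTop (𝓝 0) :=
  Real.tendsto_exp_atBot.comp (tendsto_id.const_mul_atTop_of_neg (neg_neg_iff_pos.2 hε))

theorem Real.isBigO_pow_mul_exp_mul_of_lt {a b : ℝ} (hab : a < b) (k : ℕ) :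
    (fun t : ℝ => t ^ k * Real.exp (a * t)) =O[atTop] fun t => Real.exp (b * t) := by
  have h := (isLittleO_pow_exp_pos_mul_atTop k (sub_pos.2 hab)).isBigO.mul
    (isBigO_refl (fun t => Real.exp (a * t)) atTop)
  refine h.congr_right fun t => ?_
  rw [← Real.exp_add]
  ring_nf

theorem Complex.isBigO_exp_mul_mul_pow_div_factorial {μ : ℂ} {ε : ℝ} (hμ : μ.re < -ε) (k : ℕ) :
    (fun t : ℝ => Complex.exp (t * μ) * ((t : ℂ) ^ k / k !)) =O[atTop]
      fun t => Real.exp (-ε * t) := by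
  refine IsBigO.trans (isBigO_of_le _ fun t => ?_) (Real.isBigO_pow_mul_exp_mul_of_lt hμ k)
  rw [norm_mul, Complex.norm_exp, norm_div, norm_pow, Complex.norm_real, Complex.norm_natCast,
    norm_mul, norm_pow, Real.norm_eq_abs, Real.norm_eq_abs, Real.abs_exp, Complex.re_ofReal_mul,
    mul_comm μ.re, mul_comm]
  exact mul_le_mul_of_nonneg_right (div_le_self (by positivity) (mod_cast k.factorial_pos))
    (Real.exp_nonneg _)

theorem Module.End.mem_spectrum_of_mem_maxGenEigenspace {R M : Type*} [CommRing R]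
    [AddCommGroup M] [Module R M] {f : Module.End R M} {μ : R} {v : M}
    (hv : v ∈ f.maxGenEigenspace μ) (hv0 : v ≠ 0) : μ ∈ spectrum R f := by
  refine HasUnifEigenvalue.mem_spectrum <|
    (hasUnifEigenvalue_iff_hasUnifEigenvalue_one (k := ⊤) (by simp)).1 fun h => hv0 ?_
  exact (Submodule.mem_bot R).1 (h ▸ hv)

section Sylvester

variable {𝔸 : Type*} [NormedRing 𝔸] [NormedAlgebra ℝ 𝔸] {a b : 𝔸} {ε : ℝ}

theorem isBigO_exp_smul_mul_mul_exp_smul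
    (ha : (fun t : ℝ => exp (t • a)) =O[atTop] fun t => Real.exp (-ε * t))
    (hb : (fun t : ℝ => exp (t • b)) =O[atTop] fun _ => (1 : ℝ)) (c : 𝔸) :
    (fun t : ℝ => exp (t • a) * c * exp (t • b)) =O[atTop] fun t => Real.exp (-ε * t) := by
  simpa using (ha.mul (isBigO_const_const c one_ne_zero atTop)).mul hb

theorem tendsto_exp_smul_mul_mul_exp_smul_atTop (hε : 0 < ε)
    (ha : (fun t : ℝ => exp (t • a)) =O[atTop] fun t => Real.exp (-ε * t))
    (hb : (fun t : ℝ => exp (t • b)) =O[atTop] fun _ => (1 : ℝ)) (c : 𝔸) :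
    Tendsto (fun t : ℝ => exp (t • a) * c * exp (t • b)) atTop (𝓝 0) :=
  (isBigO_exp_smul_mul_mul_exp_smul ha hb c).trans_tendsto
    (Real.tendsto_exp_neg_mul_atTop_nhds_zero hε)

theorem mul_add_mul_exp_smul_mul_mul_exp_smul (a b c : 𝔸) (t : ℝ) :
    a * (exp (t • a) * c * exp (t • b)) + exp (t • a) * c * exp (t • b) * b =
      exp (t • a) * (a * c + c * b) * exp (t • b) := by
  have ha : a * exp (t • a) = exp (t • a) * a := ((Commute.refl a).smul_right t).exp_right.eq
  have hb : exp (t • b) * b = b * exp (t • b) := ((Commute.refl b).smul_right t).exp_right.eq.symm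
  rw [← mul_assoc, ← mul_assoc, ha, mul_assoc _ _ b, hb]
  noncomm_ring

variable [CompleteSpace 𝔸]

theorem hasDerivAt_exp_smul_mul_mul_exp_smul (a b c : 𝔸) (t : ℝ) :
    HasDerivAt (fun s : ℝ => exp (s • a) * c * exp (s • b))
      (exp (t • a) * (a * c + c * b) * exp (t • b)) t := by
  refine (((hasDerivAt_exp_smul_const' a t).mul_const c).mul
    (hasDerivAt_exp_smul_const b t)).congr_deriv ?_
  rw [← mul_add_mul_exp_smul_mul_mul_exp_smul]
  noncomm_ring

theorem integrableOn_Ioi_exp_smul_mul_mul_exp_smul (hε : 0 < ε)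
    (ha : (fun t : ℝ => exp (t • a)) =O[atTop] fun t => Real.exp (-ε * t))
    (hb : (fun t : ℝ => exp (t • b)) =O[atTop] fun _ => (1 : ℝ)) (c : 𝔸) :
    IntegrableOn (fun t : ℝ => exp (t • a) * c * exp (t • b)) (Ioi 0) := by
  have hcont : Continuous fun t : ℝ => exp (t • a) * c * exp (t • b) :=
    continuous_iff_continuousAt.2 fun t =>
      (hasDerivAt_exp_smul_mul_mul_exp_smul a b c t).continuousAt
  exact (integrable_norm_iff hcont.aestronglyMeasurable).1 <|
    integrable_of_isBigO_exp_neg hε hcont.norm.continuousOn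
      (isBigO_exp_smul_mul_mul_exp_smul ha hb c).norm_left

theorem integral_exp_smul_mul_sylvester_mul_exp_smul (hε : 0 < ε)
    (ha : (fun t : ℝ => exp (t • a)) =O[atTop] fun t => Real.exp (-ε * t))
    (hb : (fun t : ℝ => exp (t • b)) =O[atTop] fun _ => (1 : ℝ)) (c : 𝔸) :
    ∫ t in Ioi (0 : ℝ), exp (t • a) * (a * c + c * b) * exp (t • b) = -c := by
  rw [integral_Ioi_of_hasDerivAt_of_tendsto'
    (fun t _ => hasDerivAt_exp_smul_mul_mul_exp_smul a b c t)
    (integrableOn_Ioi_exp_smul_mul_mul_exp_smul hε ha hb _)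
    (tendsto_exp_smul_mul_mul_exp_smul_atTop hε ha hb c)]
  simp

theorem mul_integral_add_integral_mul (hε : 0 < ε)
    (ha : (fun t : ℝ => exp (t • a)) =O[atTop] fun t => Real.exp (-ε * t))
    (hb : (fun t : ℝ => exp (t • b)) =O[atTop] fun _ => (1 : ℝ)) (c : 𝔸) :
    a * (∫ t in Ioi (0 : ℝ), exp (t • a) * c * exp (t • b)) +
        (∫ t in Ioi (0 : ℝ), exp (t • a) * c * exp (t • b)) * b =
      ∫ t in Ioi (0 : ℝ), exp (t • a) * (a * c + c * b) * exp (t • b) := by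
  have hint := integrableOn_Ioi_exp_smul_mul_mul_exp_smul hε ha hb c
  rw [← integral_const_mul_of_integrable hint, ← integral_mul_const_of_integrable hint,
    ← integral_add (hint.const_mul a) (hint.mul_const b)]
  exact integral_congr_ae (ae_of_all _ (mul_add_mul_exp_smul_mul_mul_exp_smul a b c))

theorem sylvester_eq_iff_eq_integral (hε : 0 < ε)
    (ha : (fun t : ℝ => exp (t • a)) =O[atTop] fun t => Real.exp (-ε * t))
    (hb : (fun t : ℝ => exp (t • b)) =O[atTop] fun _ => (1 : ℝ)) (c x : 𝔸) :
    c + a * x + x * b = 0 ↔ x = ∫ t in Ioi (0 : ℝ), exp (t • a) * c * exp (t • b) := by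
  have hinv := integral_exp_smul_mul_sylvester_mul_exp_smul hε ha hb
  constructor
  · intro h
    have hx : a * x + x * b = -c := eq_neg_of_add_eq_zero_right (by rwa [← add_assoc])
    calc x = -∫ t in Ioi (0 : ℝ), exp (t • a) * (a * x + x * b) * exp (t • b) := by
          rw [hinv, neg_neg]
      _ = ∫ t in Ioi (0 : ℝ), exp (t • a) * c * exp (t • b) := by
          simp [hx, integral_neg]
  · rintro rfl
    rw [add_assoc, mul_integral_add_integral_mul hε ha hb, hinv, add_neg_cancel]

end Sylvester

namespace Matrix

open scoped Matrix.Norms.Operator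

variable {m n : Type*} [Fintype m] [Fintype n]

theorem linfty_opNorm_le_sum_sum_norm {E : Type*} [SeminormedAddCommGroup E] (A : Matrix m n E) :
    ‖A‖ ≤ ∑ i, ∑ j, ‖A i j‖ := by
  have h : (univ.sup fun i => ∑ j, ‖A i j‖₊) ≤ ∑ i, ∑ j, ‖A i j‖₊ :=
    Finset.sup_le fun i _ => single_le_sum (f := fun i => ∑ j, ‖A i j‖₊)
      (fun _ _ => zero_le) (mem_univ i)
  rw [linfty_opNorm_def]
  refine (NNReal.coe_le_coe.2 h).trans_eq ?_
  simp

theorem isBigO_of_forall_isBigO_apply {E F α : Type*} [SeminormedAddCommGroup E] [Norm F]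
    {l : Filter α} {f : α → Matrix m n E} {g : α → F}
    (h : ∀ i j, (fun x => f x i j) =O[l] g) : f =O[l] g := by
  have hsum : (fun x => ∑ i, ∑ j, ‖f x i j‖) =O[l] g :=
    IsBigO.fun_sum fun i _ => IsBigO.fun_sum fun j _ => (h i j).norm_left
  refine IsBigO.trans (isBigO_of_le l fun x => ?_) hsum
  rw [Real.norm_of_nonneg (by positivity)]
  exact linfty_opNorm_le_sum_sum_norm _

theorem PosSemidef.of_integral_apply {α : Type*} [MeasurableSpace α] {μ : Measure α}
    {f : α → Matrix n n ℝ} (hf : ∀ i j, Integrable (fun x => f x i j) μ)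
    (hpos : ∀ x, (f x).PosSemidef) : (of fun i j => ∫ x, f x i j ∂μ).PosSemidef := by
  refine .of_dotProduct_mulVec_nonneg (IsHermitian.ext fun i j => ?_) fun v => ?_
  · exact integral_congr_ae (ae_of_all _ fun x => (hpos x).1.apply i j)
  · have hquad : star v ⬝ᵥ (of fun i j => ∫ x, f x i j ∂μ) *ᵥ v =
        ∫ x, star v ⬝ᵥ f x *ᵥ v ∂μ := by
      simp only [dotProduct, mulVec, of_apply, star_trivial, mul_sum]
      rw [integral_finsetSum _ fun i _ => integrable_finsetSum _ fun j _ =>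
        ((hf i j).mul_const _).const_mul _]
      refine sum_congr rfl fun i _ => ?_
      rw [integral_finsetSum _ fun j _ => ((hf i j).mul_const _).const_mul _]
      refine sum_congr rfl fun j _ => ?_
      rw [integral_const_mul, integral_mul_const]
    rw [hquad]
    exact integral_nonneg fun x => (hpos x).dotProduct_mulVec_nonneg v

variable [DecidableEq n]

theorem exp_smul_mulVec_of_pow_sub_mulVec_eq_zero {A : Matrix n n ℂ} {μ : ℂ} {m : ℕ}
    {v : n → ℂ} (hv : (A - μ • 1) ^ m *ᵥ v = 0) (z : ℂ) :
    exp (z • A) *ᵥ v =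
      Complex.exp (z * μ) • ∑ k ∈ range m, (z ^ k / k ! : ℂ) • ((A - μ • 1) ^ k *ᵥ v) := by
  set N := A - μ • 1
  have hsplit : z • A = (z * μ) • (1 : Matrix n n ℂ) + z • N := by
    simp only [N, smul_sub, smul_smul]; abel
  have hcomm : Commute ((z * μ) • (1 : Matrix n n ℂ)) (z • N) :=
    ((Commute.one_left N).smul_left _).smul_right _
  have hscalar : exp ((z * μ) • (1 : Matrix n n ℂ)) = Complex.exp (z * μ) • 1 := by
    rw [← Algebra.algebraMap_eq_smul_one, ← Algebra.algebraMap_eq_smul_one,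
      Complex.exp_eq_exp_ℂ]
    exact (algebraMap_exp_comm (z * μ)).symm
  have hterm (k : ℕ) : mulVec.addMonoidHomLeft v ((k ! : ℂ)⁻¹ • (z • N) ^ k) =
      (z ^ k / k ! : ℂ) • (N ^ k *ᵥ v) := by
    change ((k ! : ℂ)⁻¹ • (z • N) ^ k) *ᵥ v = _
    rw [smul_pow, smul_smul, smul_mulVec, inv_mul_eq_div]
  have hvanish (k : ℕ) (hk : m ≤ k) : N ^ k *ᵥ v = 0 := by
    rw [← Nat.sub_add_cancel hk, pow_add, ← mulVec_mulVec, hv, mulVec_zero]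
  have hnil : exp (z • N) *ᵥ v = ∑ k ∈ range m, (z ^ k / k ! : ℂ) • (N ^ k *ᵥ v) := by
    have hs := (exp_series_hasSum_exp' (𝕂 := ℂ) (z • N)).map
      (mulVec.addMonoidHomLeft v) (continuous_id.matrix_mulVec continuous_const)
    simp only [Function.comp_def, hterm] at hs
    exact hs.unique (hasSum_sum_of_ne_finset_zero fun k hk => by
      rw [hvanish k (by simpa using hk), smul_zero])
  rw [hsplit, exp_add_of_commute _ _ hcomm, hscalar, smul_mul, one_mul, smul_mulVec, hnil]

theorem isBigO_exp_smul_mulVec_of_pow_sub_mulVec_eq_zero {A : Matrix n n ℂ} {μ : ℂ} {m : ℕ}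
    {v : n → ℂ} (hv : (A - μ • 1) ^ m *ᵥ v = 0) {ε : ℝ} (hμ : μ.re < -ε) :
    (fun t : ℝ => exp (t • A) *ᵥ v) =O[atTop] fun t => Real.exp (-ε * t) := by
  have hformula (t : ℝ) : exp (t • A) *ᵥ v = ∑ k ∈ range m,
      (Complex.exp (t * μ) * ((t : ℂ) ^ k / k !)) • ((A - μ • 1) ^ k *ᵥ v) := by
    rw [← Complex.coe_smul, exp_smul_mulVec_of_pow_sub_mulVec_eq_zero hv, smul_sum]
    simp only [smul_smul]
  simp only [hformula]
  refine IsBigO.fun_sum fun k _ => ?_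
  simpa only [smul_eq_mul, mul_one] using (Complex.isBigO_exp_mul_mul_pow_div_factorial hμ k).smul
    (isBigO_const_const ((A - μ • 1) ^ k *ᵥ v) (one_ne_zero : (1 : ℝ) ≠ 0) atTop)

theorem isBigO_exp_smul_mulVec {A : Matrix n n ℂ} {ε : ℝ} (hA : ∀ μ ∈ spectrum ℂ A, μ.re < -ε)
    (v : n → ℂ) : (fun t : ℝ => exp (t • A) *ᵥ v) =O[atTop] fun t => Real.exp (-ε * t) := by
  have hv : v ∈ ⨆ μ, Module.End.maxGenEigenspace (toLinAlgEquiv' A) μ := by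
    rw [Module.End.iSup_maxGenEigenspace_eq_top]
    exact Submodule.mem_top
  refine Submodule.iSup_induction (motive := fun w =>
      (fun t : ℝ => exp (t • A) *ᵥ w) =O[atTop] fun t => Real.exp (-ε * t)) _ hv
    (fun μ w hw => ?_) (by simpa only [mulVec_zero] using isBigO_zero _ _)
    fun x y hx hy => by simpa only [mulVec_add] using hx.add hy
  rcases eq_or_ne w 0 with rfl | hw0
  · simpa only [mulVec_zero] using isBigO_zero _ _
  obtain ⟨m, hm⟩ := (Module.End.mem_maxGenEigenspace _ _ _).1 hw
  refine isBigO_exp_smul_mulVec_of_pow_sub_mulVec_eq_zero (m := m) ?_ (hA μ ?_)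
  · rwa [← toLinAlgEquiv'_apply, map_pow, map_sub, map_smul, map_one]
  · rw [← AlgEquiv.spectrum_eq toLinAlgEquiv' A]
    exact Module.End.mem_spectrum_of_mem_maxGenEigenspace hw hw0

theorem exp_map_ofReal (B : Matrix n n ℝ) :
    (exp B).map Complex.ofReal = exp (B.map Complex.ofReal) :=
  map_exp Complex.ofRealHom.mapMatrix (continuous_id.matrix_map Complex.continuous_ofReal) B

theorem isBigO_exp_smul_apply_of_forall_re_lt {M : Matrix n n ℝ} {ε : ℝ}
    (hM : ∀ μ ∈ spectrum ℂ (M.map Complex.ofReal), μ.re < -ε) (i j : n) :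
    (fun t : ℝ => exp (t • M) i j) =O[atTop] fun t => Real.exp (-ε * t) := by
  have hentry (t : ℝ) : ‖(exp (t • M.map Complex.ofReal) *ᵥ Pi.single j 1) i‖ =
      ‖exp (t • M) i j‖ := by
    have hmap : (t • M).map Complex.ofReal = t • M.map Complex.ofReal := by ext; simp
    rw [mulVec_single_one, col_apply, ← hmap, ← exp_map_ofReal, map_apply, Complex.norm_real]
  exact isBigO_norm_left.1 <|
    ((isBigO_pi.1 (isBigO_exp_smul_mulVec hM (Pi.single j 1)) i).norm_left.congr_left hentry)

theorem exists_isBigO_exp_smul_of_forall_re_neg {M : Matrix n n ℝ}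
    (hM : ∀ μ ∈ spectrum ℂ (M.map Complex.ofReal), μ.re < 0) :
    ∃ ε > 0, ((fun t : ℝ => exp (t • M)) =O[atTop] fun t => Real.exp (-ε * t)) ∧
      (fun t : ℝ => exp (t • Mᵀ)) =O[atTop] fun _ => (1 : ℝ) := by
  obtain ⟨ε, hε, hMε⟩ := (M.map Complex.ofReal).finite_spectrum.exists_pos_forall_lt_neg hM
  have hentry := isBigO_exp_smul_apply_of_forall_re_lt hMε
  have htranspose : (fun t : ℝ => exp (t • Mᵀ)) =O[atTop] fun t => Real.exp (-ε * t) :=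
    isBigO_of_forall_isBigO_apply fun i j => by
      simpa only [← transpose_smul, exp_transpose, transpose_apply] using hentry j i
  exact ⟨ε, hε, isBigO_of_forall_isBigO_apply hentry,
    htranspose.trans ((Real.tendsto_exp_neg_mul_atTop_nhds_zero hε).isBigO_one ℝ)⟩

theorem lyapunov_eq_zero_iff_eq_integral {M : Matrix n n ℝ}
    (hM : ∀ μ ∈ spectrum ℂ (M.map Complex.ofReal), μ.re < 0) (U X : Matrix n n ℝ) :
    U + M * X + X * Mᵀ = 0 ↔
      X = of fun i j => ∫ t in Ioi (0 : ℝ), (exp (t • M) * U * exp (t • Mᵀ)) i j := by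
  obtain ⟨ε, hε, ha, hb⟩ := exists_isBigO_exp_smul_of_forall_re_neg hM
  have hint := integrableOn_Ioi_exp_smul_mul_mul_exp_smul hε ha hb U
  have hentries : (of fun i j => ∫ t in Ioi (0 : ℝ), (exp (t • M) * U * exp (t • Mᵀ)) i j) =
      ∫ t in Ioi (0 : ℝ), exp (t • M) * U * exp (t • Mᵀ) := by
    ext i j
    exact (LinearMap.toContinuousLinearMap (entryLinearMap ℝ ℝ i j)).integral_comp_comm hint
  rw [hentries]
  exact sylvester_eq_iff_eq_integral hε ha hb U X

theorem posSemidef_lyapunov_integral {M : Matrix n n ℝ}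
    (hM : ∀ μ ∈ spectrum ℂ (M.map Complex.ofReal), μ.re < 0) {U : Matrix n n ℝ}
    (hU : U.PosSemidef) :
    (of fun i j => ∫ t in Ioi (0 : ℝ), (exp (t • M) * U * exp (t • Mᵀ)) i j).PosSemidef := by
  obtain ⟨ε, hε, ha, hb⟩ := exists_isBigO_exp_smul_of_forall_re_neg hM
  have hint := integrableOn_Ioi_exp_smul_mul_mul_exp_smul hε ha hb U
  refine PosSemidef.of_integral_apply
    (fun i j => (LinearMap.toContinuousLinearMap (entryLinearMap ℝ ℝ i j)).integrable_comp hint)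
    fun t => ?_
  rw [← transpose_smul, exp_transpose, ← conjTranspose_eq_transpose_of_trivial]
  exact hU.mul_mul_conjTranspose_same _

end Matrix

/-- If `M` is Hurwitz (all eigenvalues have strictly negative real part), then for
every symmetric positive semidefinite `U`, the Lyapunov equation
`U + M V + V Mᵀ = 0` has the unique solution
`V = ∫_0^∞ e^{Mt} U e^{Mᵀ t} dt` (entrywise integral), which is symmetric
positive semidefinite. -/
theorem lyapunov_solution (d : ℕ) (M U : Matrix (Fin d) (Fin d) ℝ)
    (hHurwitz : ∀ μ ∈ spectrum ℂ (M.map (Complex.ofReal)), μ.re < 0)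
    (hU : U.PosSemidef) :
    letI V : Matrix (Fin d) (Fin d) ℝ :=
      Matrix.of fun i j =>
        ∫ t in Set.Ioi (0 : ℝ),
          ((NormedSpace.exp (t • M)) * U * (NormedSpace.exp (t • Mᵀ))) i j
    U + M * V + V * Mᵀ = 0 ∧ V.PosSemidef ∧
      ∀ V' : Matrix (Fin d) (Fin d) ℝ, U + M * V' + V' * Mᵀ = 0 → V' = V := by
  have hsolution := Matrix.lyapunov_eq_zero_iff_eq_integral hHurwitz U
  exact ⟨(hsolution _).2 rfl, Matrix.posSemidef_lyapunov_integral hHurwitz hU,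
    fun V' hV' => (hsolution V').1 hV'⟩
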